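/- arXiv:0912.3701 — 2 statements merged into one kernel-verified Lean document; each statement's English description precedes it below -/
import Mathlib

section
/- The intertwining elements of H_n(q) satisfy the braid relation: U_{k+1} U_{k+2} U_{k+1} = U_{k+2} U_{k+1} U_{k+2} for each k with 1 ≤ k ≤ n−2. -/
open FreeAlgebra in
/-- Defining relations of the A-type Hecke algebra `H_n(q)` on generators
`σ_1, …, σ_{n-1}` (generator `i : Fin (n-1)` represents `σ_{i+1}`). -/
inductive HeckeRel (n : ℕ) (q : ℂ) :
    FreeAlgebra ℂ (Fin (n - 1)) → FreeAlgebra ℂ (Fin (n - 1)) → Prop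
  | braid (i j : Fin (n - 1)) (h : (i : ℕ) + 1 = (j : ℕ)) :
      HeckeRel n q (ι ℂ i * ι ℂ j * ι ℂ i) (ι ℂ j * ι ℂ i * ι ℂ j)
  | comm (i j : Fin (n - 1)) (h : (i : ℕ) + 1 < (j : ℕ)) :
      HeckeRel n q (ι ℂ i * ι ℂ j) (ι ℂ j * ι ℂ i)
  | quad (i : Fin (n - 1)) :
      HeckeRel n q (ι ℂ i * ι ℂ i) (1 + (q - q⁻¹) • ι ℂ i)

/-- The A-type Hecke algebra `H_n(q)`. -/
abbrev HeckeAlgebra (n : ℕ) (q : ℂ) := RingQuot (HeckeRel n q)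

/-- The generator `σ_k` (1-based: valid for `1 ≤ k ≤ n-1`; junk value `1` otherwise). -/
noncomputable def heckeGen (n : ℕ) (q : ℂ) (k : ℕ) : HeckeAlgebra n q :=
  if h : k - 1 < n - 1 then RingQuot.mkAlgHom ℂ (HeckeRel n q) (FreeAlgebra.ι ℂ ⟨k - 1, h⟩)
  else 1

/-- The Jucys–Murphy elements, 1-based: `jm 1 = 1`, `jm (i+1) = σ_i * jm i * σ_i`. -/
noncomputable def jm (n : ℕ) (q : ℂ) : ℕ → HeckeAlgebra n q
  | 0 => 1
  | 1 => 1
  | (i + 2) => heckeGen n q (i + 1) * jm n q (i + 1) * heckeGen n q (i + 1)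


/-- The intertwining element `U_{k+1} = σ_k y_k − y_k σ_k`. -/
noncomputable def heckeU (n : ℕ) (q : ℂ) (k : ℕ) : HeckeAlgebra n q :=
  heckeGen n q k * jm n q k - jm n q k * heckeGen n q k

/-!
Write `c = q - q⁻¹`, `p = y_{k+1} = σ_k y_k σ_k` and `r = y_{k+2} = σ_{k+1} p σ_{k+1}`.
The quadratic relation gives `σ_k y_k = p σ_k - c p`, `σ_k p = y_k σ_k + c p`, and the same
for `σ_{k+1}`, `p`, `r`; `σ_{k+1}` commutes with `y_k`, the braid relation makes `σ_k` commute
with `r`, and `y_k`, `p`, `r` commute pairwise. With these rules every word in `σ_k, σ_{k+1}, y_k` has a normal form with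
the Jucys–Murphy elements on the left, and both sides of the braid relation for the
intertwiners reduce to the same one. So the identity holds for any `a, b, y` in any algebra
satisfying these relations, and it remains to check them in `H_n(q)`.
-/

section Braid

variable {K R : Type*} [CommRing K] [Ring R] [Algebra K R]

theorem conj_mul_of_mul_self_eq {c : K} {a : R} (ha : a * a = 1 + c • a) (y : R) :
    a * y * a * a = a * y + c • (a * y * a) := by
  rw [mul_assoc _ a a, ha, mul_add, mul_one, mul_smul_comm]

theorem mul_conj_of_mul_self_eq {c : K} {a : R} (ha : a * a = 1 + c • a) (y : R) :
    a * (a * y * a) = y * a + c • (a * y * a) := by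
  rw [mul_assoc a y, ← mul_assoc, ha, add_mul, one_mul, smul_mul_assoc, ← mul_assoc]

variable {a b y : R}

theorem commute_conj_conj (hab : a * b * a = b * a * b) (hby : Commute b y)
    (hy : Commute y (a * y * a)) : Commute (a * y * a) (b * (a * y * a) * b) := by
  have hab₁ : a * (b * a) = b * (a * b) := by rw [← mul_assoc, hab, mul_assoc]
  have hab₂ : ∀ x, a * (b * (a * x)) = b * (a * (b * x)) := fun x => by
    simp only [← mul_assoc, hab]
  have hby' : ∀ x, b * (y * x) = y * (b * x) := fun x => by
    rw [← mul_assoc, hby.eq, mul_assoc]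
  have hL : a * y * a * (b * (a * y * a) * b) = a * b * (y * (a * y * a)) * (b * a) := by
    simp only [mul_assoc]
    rw [hab₂, ← hby']
    nth_rw 2 [hby']
    rw [← hab₁]
  have hR : b * (a * y * a) * b * (a * y * a) = a * b * ((a * y * a) * y) * (b * a) := by
    simp only [mul_assoc]
    rw [hab₂, ← hby']
    nth_rw 2 [hby']
    rw [← hab₂]
  rw [Commute, SemiconjBy, hL, hR, hy.eq]

theorem commute_braid_conj (hab : a * b * a = b * a * b) (hby : Commute b y) :
    Commute a (b * (a * y * a) * b) := by
  have hab₁ : a * (b * a) = b * (a * b) := by rw [← mul_assoc, hab, mul_assoc]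
  have hab₂ : ∀ x, a * (b * (a * x)) = b * (a * (b * x)) := fun x => by
    simp only [← mul_assoc, hab]
  have hby' : ∀ x, b * (y * x) = y * (b * x) := fun x => by
    rw [← mul_assoc, hby.eq, mul_assoc]
  simp only [Commute, SemiconjBy, mul_assoc]
  rw [hab₂, hby', ← hab₁]

theorem intertwiner_braid {c : K} (ha : a * a = 1 + c • a) (hb : b * b = 1 + c • b)
    (hab : a * b * a = b * a * b) (hby : Commute b y) (hy : Commute y (a * y * a)) :
    (a * y - y * a) * (b * (a * y * a) - a * y * a * b) * (a * y - y * a) =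
      (b * (a * y * a) - a * y * a * b) * (a * y - y * a) *
        (b * (a * y * a) - a * y * a * b) := by
  have hpr := commute_conj_conj hab hby hy
  have har := commute_braid_conj hab hby
  set p := a * y * a
  set r := b * p * b
  have hyr : Commute y r := (hby.symm.mul_right hy).mul_right hby.symm
  have hay : a * y = p * a - c • p := by rw [conj_mul_of_mul_self_eq ha, add_sub_cancel_right]
  have hap : a * p = y * a + c • p := mul_conj_of_mul_self_eq ha y
  have hbp : b * p = r * b - c • r := by rw [conj_mul_of_mul_self_eq hb, add_sub_cancel_right]
  have hbr : b * r = p * b + c • r := mul_conj_of_mul_self_eq hb p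
  have hassoc : ∀ {u v w : R}, u * v = w → ∀ x, u * (v * x) = w * x := fun h x => by
    rw [← mul_assoc, h]
  have hab₁ : a * (b * a) = b * (a * b) := by rw [← mul_assoc, hab, mul_assoc]
  -- These rules move `a`, `b` to the right of `y`, `p`, `r` and sort `y`, `p`, `r`,
  -- so both sides reach the same normal form.
  simp only [mul_sub, sub_mul, mul_add, add_mul, smul_mul_assoc, mul_smul_comm, smul_sub,
    smul_add, smul_smul, mul_assoc, mul_one, ha, hb, hab₁, hay, hassoc hay, hap, hassoc hap, hbp,
    hassoc hbp, hbr, hassoc hbr, har.eq, hassoc har.eq, hassoc hby.eq, hassoc hy.eq.symm,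
    hyr.eq.symm, hassoc hyr.eq.symm, hpr.eq.symm, hassoc hpr.eq.symm]
  module

end Braid

section Hecke

variable (n : ℕ) (q : ℂ)

theorem heckeGen_mul_self {k : ℕ} (hk : k - 1 < n - 1) :
    heckeGen n q k * heckeGen n q k = 1 + (q - q⁻¹) • heckeGen n q k := by
  simp only [heckeGen, dif_pos hk]
  rw [← map_mul, RingQuot.mkAlgHom_rel _ (HeckeRel.quad ⟨k - 1, hk⟩), map_add, map_one, map_smul]

theorem heckeGen_braid {k : ℕ} (hk1 : 1 ≤ k) (hk : k + 1 < n) :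
    heckeGen n q k * heckeGen n q (k + 1) * heckeGen n q k =
      heckeGen n q (k + 1) * heckeGen n q k * heckeGen n q (k + 1) := by
  have h₁ : k - 1 < n - 1 := by omega
  have h₂ : k + 1 - 1 < n - 1 := by omega
  simp only [heckeGen, dif_pos h₁, dif_pos h₂, ← map_mul]
  rw [RingQuot.mkAlgHom_rel _ (HeckeRel.braid ⟨k - 1, h₁⟩ ⟨k + 1 - 1, h₂⟩ (by simp; omega))]

theorem heckeGen_commute {j m : ℕ} (hj : 1 ≤ j) (hjm : j + 1 < m) :
    Commute (heckeGen n q j) (heckeGen n q m) := by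
  by_cases hm : m - 1 < n - 1
  · have hj' : j - 1 < n - 1 := by omega
    simp only [Commute, SemiconjBy, heckeGen, dif_pos hj', dif_pos hm, ← map_mul]
    rw [RingQuot.mkAlgHom_rel _ (HeckeRel.comm ⟨j - 1, hj'⟩ ⟨m - 1, hm⟩ (by simp; omega))]
  · simp only [heckeGen, dif_neg hm]
    exact Commute.one_right _

theorem jm_succ {k : ℕ} (hk : 1 ≤ k) :
    jm n q (k + 1) = heckeGen n q k * jm n q k * heckeGen n q k := by
  obtain ⟨k, rfl⟩ := Nat.exists_eq_add_of_le' hk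
  rfl

theorem heckeGen_commute_jm {m : ℕ} : ∀ i < m, Commute (heckeGen n q m) (jm n q i)
  | 0, _ | 1, _ => Commute.one_right _
  | i + 2, hi => by
    have hσ := (heckeGen_commute n q (j := i + 1) (by omega) (by omega)).symm
    rw [jm_succ n q (by omega)]
    exact (hσ.mul_right (heckeGen_commute_jm (i + 1) (by omega))).mul_right hσ

theorem jm_commute_jm_succ : ∀ k, Commute (jm n q k) (jm n q (k + 1))
  | 0 | 1 => Commute.one_left _
  | k + 2 => by
    rw [jm_succ n q (k := k + 2) (by omega)]
    by_cases hk : k + 2 < n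
    · rw [jm_succ n q (k := k + 1) (by omega)]
      exact commute_conj_conj (heckeGen_braid n q (by omega) hk)
        (heckeGen_commute_jm n q _ (by omega))
        (jm_succ n q (k := k + 1) (by omega) ▸ jm_commute_jm_succ (k + 1))
    · simp only [heckeGen, dif_neg (show ¬k + 2 - 1 < n - 1 by omega), one_mul, mul_one]
      exact Commute.refl _

end Hecke

theorem heckeU_braid_general (n : ℕ) (q : ℂ) (k : ℕ)
    (hk1 : 1 ≤ k) (hkn : k ≤ n - 2) :
    heckeU n q k * heckeU n q (k + 1) * heckeU n q k =
      heckeU n q (k + 1) * heckeU n q k * heckeU n q (k + 1) := by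
  have hy := jm_succ n q hk1
  unfold heckeU
  rw [hy]
  exact intertwiner_braid (heckeGen_mul_self n q (by omega)) (heckeGen_mul_self n q (by omega))
    (heckeGen_braid n q hk1 (by omega)) (heckeGen_commute_jm n q k (by omega))
    (hy ▸ jm_commute_jm_succ n q k)

/-- the intertwining elements satisfy the braid relation
`U_{k+1} U_{k+2} U_{k+1} = U_{k+2} U_{k+1} U_{k+2}`. -/
theorem heckeU_braid (n : ℕ) (q : ℂ) (hn : 1 ≤ n) (hq : q ≠ 0) (k : ℕ)
    (hk1 : 1 ≤ k) (hkn : k ≤ n - 2) :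
    heckeU n q k * heckeU n q (k + 1) * heckeU n q k =
      heckeU n q (k + 1) * heckeU n q k * heckeU n q (k + 1) :=
  heckeU_braid_general n q k hk1 hkn
end

section
/- (Proposition 2) Let ρ be a representation of H_n(q) on a finite-dimensional complex vector space V. Then for each j with 1 ≤ j ≤ n, every eigenvalue of the operator ρ(y_j) is of the form q^{2m} for some integer m with 1 − j ≤ m ≤ j − 1. -/
/-!
Induction on `j`. The elements `y_{j+1} = σ_j y_j σ_j` and `y_j` commute, so they have a common
eigenvector `v`, with eigenvalues `μ` and `ν`. If `σ_j v = c v`, then `c² = 1 + (q - q⁻¹) c`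
forces `c ∈ {q, -q⁻¹}` and `μ = c² ν = q^{±2} ν`. Otherwise `v` and `σ_j v` span a plane
stable under `y_j`, on which `y_j` is triangular with eigenvalues `ν` and `μ`; so `μ` is
already an eigenvalue of `y_j`.
-/

theorem Commute.mul_mul_mul_mul_of_braid {M : Type*} [Monoid M] {a b z : M}
    (hab : b * a * b = a * b * a) (haz : Commute a z) : Commute b (a * b * z * b * a) :=
  calc b * (a * b * z * b * a) = b * a * b * (z * b * a) := by simp only [mul_assoc]
    _ = a * b * (a * z) * b * a := by rw [hab]; simp only [mul_assoc]
    _ = a * b * z * (a * b * a) := by rw [haz.eq]; simp only [mul_assoc]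
    _ = a * b * z * b * a * b := by rw [← hab]; simp only [mul_assoc]

theorem eq_or_eq_neg_inv_of_mul_self_eq {K : Type*} [Field K] {q c : K} (hq : q ≠ 0)
    (hc : c * c = 1 + (q - q⁻¹) * c) : c = q ∨ c = -q⁻¹ := by
  have : (c - q) * (c + q⁻¹) = 0 := by
    linear_combination hc - mul_inv_cancel₀ hq
  rcases mul_eq_zero.mp this with h | h
  · exact .inl (sub_eq_zero.mp h)
  · exact .inr (eq_neg_of_add_eq_zero_left h)

namespace Module.End

theorem exists_hasEigenvector_of_commute {K V : Type*} [Field K] [IsAlgClosed K]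
    [AddCommGroup V] [Module K V] [FiniteDimensional K V] {f g : End K V} (hfg : Commute f g)
    {μ : K} (hμ : f.HasEigenvalue μ) : ∃ ν v, f.HasEigenvector μ v ∧ g.HasEigenvector ν v := by
  have hg : Set.MapsTo g (f.eigenspace μ) (f.eigenspace μ) :=
    mapsTo_genEigenspace_of_comm hfg μ 1
  have : Nontrivial (f.eigenspace μ) := Submodule.nontrivial_iff_ne_bot.mpr hμ
  obtain ⟨ν, hν⟩ := exists_eigenvalue (g.restrict hg)
  obtain ⟨⟨v, hv⟩, hvν⟩ := hν.exists_hasEigenvector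
  have hv0 : v ≠ 0 := fun h ↦ hvν.2 (Subtype.ext h)
  exact ⟨ν, v, ⟨hv, hv0⟩,
    ⟨mem_eigenspace_iff.mpr (congrArg Subtype.val hvν.apply_eq_smul), hv0⟩⟩

variable {K V : Type*} [Field K] [AddCommGroup V] [Module K V]

theorem mul_self_eq_of_apply_eq_smul {s : End K V} {t c : K} {v : V} (hs : s * s = 1 + t • s)
    (hv : v ≠ 0) (hsv : s v = c • v) : c * c = 1 + t * c := by
  refine smul_left_injective K hv ?_
  have := congrArg (· v) hs
  simp only [mul_apply, LinearMap.add_apply, one_apply, LinearMap.smul_apply, hsv,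
    map_smul] at this
  simp only [mul_smul, add_smul, one_smul, this]

theorem apply_apply_of_eq_mul_mul {A B s : End K V} {t μ : K} {v : V} (hA : A = s * B * s)
    (hs : s * s = 1 + t • s) (hAv : A v = μ • v) : B (s v) = μ • s v - (t * μ) • v := by
  have hsA : s (A v) = B (s v) + t • A v := by
    simpa [hA, mul_apply] using congrArg (· (B (s v))) hs
  rw [← map_smul, ← hAv, hsA, mul_smul, ← hAv]
  abel

theorem hasEigenvalue_or_eq_mul_self_mul_of_eq_mul_mul {A B s : End K V} {t μ ν : K} {v : V}
    (hA : A = s * B * s) (hs : s * s = 1 + t • s) (hAv : A.HasEigenvector μ v)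
    (hBv : B.HasEigenvector ν v) :
    B.HasEigenvalue μ ∨ ∃ c, c * c = 1 + t * c ∧ μ = c * c * ν := by
  have hAv' := hAv.apply_eq_smul
  have hBv' := hBv.apply_eq_smul
  by_cases hsv : ∃ c : K, s v = c • v
  · obtain ⟨c, hc⟩ := hsv
    refine .inr ⟨c, mul_self_eq_of_apply_eq_smul hs hBv.2 hc, smul_left_injective K hBv.2 ?_⟩
    simp only [← hAv', hA, mul_apply, hc, map_smul, hBv', smul_smul, mul_comm, mul_left_comm]
  by_cases hμν : μ = ν
  · exact .inl (hμν ▸ hasEigenvalue_of_hasEigenvector hBv)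
  -- On the plane spanned by `v` and `s v`, `B` is triangular with diagonal `(ν, μ)`.
  refine .inl (hasEigenvalue_of_hasEigenvector (x := s v + (t * μ / (ν - μ)) • v) ⟨?_, ?_⟩)
  · have hνμ : ν - μ ≠ 0 := sub_ne_zero.mpr (Ne.symm hμν)
    rw [mem_eigenspace_iff, map_add, map_smul, apply_apply_of_eq_mul_mul hA hs hAv', hBv',
      smul_add, smul_smul, smul_smul, add_comm, ← add_sub_assoc, add_comm, add_sub_assoc,
      ← sub_smul]
    congr 2
    field_simp
    ring
  · intro h
    exact hsv ⟨-(t * μ / (ν - μ)), by rw [neg_smul, eq_neg_iff_add_eq_zero, h]⟩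

end Module.End

namespace HeckeAlgebra

variable {n : ℕ} {q : ℂ}

theorem heckeGen_of_lt {k : ℕ} (h : k - 1 < n - 1) :
    heckeGen n q k = RingQuot.mkAlgHom ℂ (HeckeRel n q) (FreeAlgebra.ι ℂ ⟨k - 1, h⟩) :=
  dif_pos h

theorem heckeGen_mul_self {k : ℕ} (hk : 1 ≤ k) (hkn : k < n) :
    heckeGen n q k * heckeGen n q k = 1 + (q - q⁻¹) • heckeGen n q k := by
  have h : k - 1 < n - 1 := by omega
  rw [heckeGen_of_lt h, ← map_mul, RingQuot.mkAlgHom_rel ℂ (HeckeRel.quad ⟨k - 1, h⟩), map_add,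
    map_one, map_smul]

theorem heckeGen_braid {k : ℕ} (hk : 1 ≤ k) (hkn : k + 1 < n) :
    heckeGen n q k * heckeGen n q (k + 1) * heckeGen n q k
      = heckeGen n q (k + 1) * heckeGen n q k * heckeGen n q (k + 1) := by
  have h : k - 1 < n - 1 := by omega
  have h' : k + 1 - 1 < n - 1 := by omega
  simp only [heckeGen_of_lt h, heckeGen_of_lt h', ← map_mul]
  exact RingQuot.mkAlgHom_rel ℂ (HeckeRel.braid ⟨k - 1, h⟩ ⟨k + 1 - 1, h'⟩ (by simp; omega))

theorem commute_heckeGen_heckeGen {a b : ℕ} (ha : 1 ≤ a) (hab : a + 1 < b) :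
    Commute (heckeGen n q a) (heckeGen n q b) := by
  unfold heckeGen
  split_ifs with h h'
  · simp only [Commute, SemiconjBy, ← map_mul]
    exact RingQuot.mkAlgHom_rel ℂ (HeckeRel.comm ⟨a - 1, h⟩ ⟨b - 1, h'⟩ (by simp; omega))
  all_goals simp

theorem jm_one : jm n q 1 = 1 := rfl

theorem jm_succ {k : ℕ} (hk : 1 ≤ k) :
    jm n q (k + 1) = heckeGen n q k * jm n q k * heckeGen n q k := by
  obtain ⟨k, rfl⟩ := Nat.exists_eq_add_of_le' hk
  rfl

theorem commute_heckeGen_jm_of_lt {k m : ℕ} (hkm : k < m) :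
    Commute (heckeGen n q m) (jm n q k) := by
  induction k with
  | zero => exact Commute.one_right _
  | succ k ih =>
    rcases Nat.eq_zero_or_pos k with rfl | hk
    · exact Commute.one_right _
    have hσ := commute_heckeGen_heckeGen (n := n) (q := q) hk (show k + 1 < m by omega)
    rw [jm_succ hk]
    exact (hσ.symm.mul_right (ih (by omega))).mul_right hσ.symm

theorem commute_heckeGen_jm {k m : ℕ} (hm : 1 ≤ m) (hmk : m + 1 < k) (hkn : k ≤ n) :
    Commute (heckeGen n q m) (jm n q k) := by
  induction k, hmk using Nat.le_induction with
  | base =>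
    rw [jm_succ (by omega), jm_succ hm, ← mul_assoc, ← mul_assoc]
    exact .mul_mul_mul_mul_of_braid (heckeGen_braid hm (by omega))
      (commute_heckeGen_jm_of_lt (by omega))
  | succ k hk ih =>
    have hσ := commute_heckeGen_heckeGen (n := n) (q := q) hm (show m + 1 < k by omega)
    rw [jm_succ (by omega)]
    exact (hσ.mul_right (ih (by omega))).mul_right hσ

theorem commute_jm_jm_succ {k : ℕ} (hkn : k < n) : Commute (jm n q k) (jm n q (k + 1)) := by
  induction k with
  | zero => exact Commute.one_left _
  | succ k ih =>
    rcases Nat.eq_zero_or_pos k with rfl | hk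
    · exact Commute.one_left _
    have hy : Commute (jm n q k) (jm n q (k + 2)) := by
      have hσ := commute_heckeGen_jm_of_lt (n := n) (q := q) (show k < k + 1 by omega)
      rw [jm_succ (by omega)]
      exact (hσ.symm.mul_right (ih (by omega))).mul_right hσ.symm
    have hσ := commute_heckeGen_jm (n := n) (q := q) hk (show k + 1 < k + 2 by omega) hkn
    rw [jm_succ hk]
    exact (hσ.mul_left hy).mul_left hσ

variable {V : Type*} [AddCommGroup V] [Module ℂ V] [FiniteDimensional ℂ V]

theorem exists_hasEigenvalue_jm_of_hasEigenvalue_jm_succ (hq : q ≠ 0)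
    (ρ : HeckeAlgebra n q →ₐ[ℂ] Module.End ℂ V) {k : ℕ} (hk : 1 ≤ k) (hkn : k < n) {μ : ℂ}
    (hμ : (ρ (jm n q (k + 1))).HasEigenvalue μ) :
    ∃ ν : ℂ, ∃ e : ℤ,
      (ρ (jm n q k)).HasEigenvalue ν ∧ -1 ≤ e ∧ e ≤ 1 ∧ μ = q ^ (2 * e) * ν := by
  obtain ⟨ν, v, hAv, hBv⟩ := Module.End.exists_hasEigenvector_of_commute
    ((commute_jm_jm_succ hkn).symm.map ρ) hμ
  have hA : ρ (jm n q (k + 1)) = ρ (heckeGen n q k) * ρ (jm n q k) * ρ (heckeGen n q k) := by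
    rw [jm_succ hk, map_mul, map_mul]
  have hs : ρ (heckeGen n q k) * ρ (heckeGen n q k) = 1 + (q - q⁻¹) • ρ (heckeGen n q k) := by
    rw [← map_mul, heckeGen_mul_self hk hkn, map_add, map_one, map_smul]
  rcases Module.End.hasEigenvalue_or_eq_mul_self_mul_of_eq_mul_mul hA hs hAv hBv with
    hμ' | ⟨c, hc, rfl⟩
  · exact ⟨μ, 0, hμ', by norm_num, by norm_num, by simp⟩
  · have hν := Module.End.hasEigenvalue_of_hasEigenvector hBv
    rcases eq_or_eq_neg_inv_of_mul_self_eq hq hc with rfl | rfl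
    · exact ⟨ν, 1, hν, by norm_num, le_rfl, by simp [sq]⟩
    · exact ⟨ν, -1, hν, le_rfl, by norm_num, by simp [sq]⟩

end HeckeAlgebra

theorem jm_eigenvalue_spec_general (n : ℕ) (q : ℂ) (hq : q ≠ 0)
    (V : Type) [AddCommGroup V] [Module ℂ V] [FiniteDimensional ℂ V]
    (ρ : HeckeAlgebra n q →ₐ[ℂ] Module.End ℂ V) (j : ℕ) (hj1 : 1 ≤ j) (hjn : j ≤ n)
    (μ : ℂ) (hμ : Module.End.HasEigenvalue (ρ (jm n q j)) μ) :
    ∃ m : ℤ, μ = q ^ (2 * m) ∧ 1 - (j : ℤ) ≤ m ∧ m ≤ (j : ℤ) - 1 := by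
  induction j, hj1 using Nat.le_induction generalizing μ with
  | base =>
    obtain ⟨v, hv⟩ := hμ.exists_hasEigenvector
    have hμ1 : μ = 1 := by
      refine smul_left_injective ℂ hv.2 ?_
      simpa [HeckeAlgebra.jm_one, eq_comm] using hv.apply_eq_smul
    exact ⟨0, by simp [hμ1], by simp, by simp⟩
  | succ k hk ih =>
    obtain ⟨ν, e, hν, he1, he2, rfl⟩ :=
      HeckeAlgebra.exists_hasEigenvalue_jm_of_hasEigenvalue_jm_succ hq ρ hk hjn hμ
    obtain ⟨m, rfl, hm1, hm2⟩ := ih (by omega) ν hν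
    exact ⟨e + m, by rw [mul_add, zpow_add₀ hq], by push_cast; omega, by push_cast; omega⟩

/-- Proposition 2: in a finite-dimensional representation `ρ` of `H_n(q)`,
every eigenvalue of `ρ(y_j)` is of the form `q^(2m)` with `1 − j ≤ m ≤ j − 1`. -/
theorem jm_eigenvalue_spec (n : ℕ) (q : ℂ) (hn : 1 ≤ n) (hq : q ≠ 0)
    (V : Type) [AddCommGroup V] [Module ℂ V] [FiniteDimensional ℂ V]
    (ρ : HeckeAlgebra n q →ₐ[ℂ] Module.End ℂ V) (j : ℕ) (hj1 : 1 ≤ j) (hjn : j ≤ n)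
    (μ : ℂ) (hμ : Module.End.HasEigenvalue (ρ (jm n q j)) μ) :
    ∃ m : ℤ, μ = q ^ (2 * m) ∧ 1 - (j : ℤ) ≤ m ∧ m ≤ (j : ℤ) - 1 :=
  jm_eigenvalue_spec_general n q hq V ρ j hj1 hjn μ hμ
end
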